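/- arXiv:2502.12885 — 3 statements merged into one kernel-verified Lean document; each statement's English description precedes it below -/
import Mathlib

section
/- Let A be a ring with property (SF) which satisfies the strong rank condition. Let N be a free A-module and M ≤ N a submodule such that at least one of M or N is finitely generated, and let L be the algebraic closure of the extension M ≤ N (so M ≤alg L ≤* N). Then every submodule L' of N with M ≤ L' such that the extension M ≤ L' is algebraic satisfies L' ≤ L; consequently L is the union of all algebraic extensions of M inside N. -/
universe u v

/-- Property (SF): every submodule of every free `A`-module is a free `A`-module. -/
def HasSF (A : Type u) [Ring A] : Prop :=
  ∀ (M : Type v) [AddCommGroup M] [Module A M], Module.Free A M →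
    ∀ N : Submodule A M, Module.Free A ↥N

/-- `M` is a free factor of `N` (written `M ≤* N`): `M ≤ N` and there is a submodule
`M' ≤ N` with `M ⊓ M' = ⊥` and `M ⊔ M' = N` such that `M'` is a free module. -/
def IsFreeFactor {A : Type*} [Ring A] {P : Type*} [AddCommGroup P] [Module A P]
    (M N : Submodule A P) : Prop :=
  M ≤ N ∧ ∃ M' : Submodule A P, M' ≤ N ∧ M ⊓ M' = ⊥ ∧ M ⊔ M' = N ∧ Module.Free A ↥M'

/-- The extension `M ≤ N` is algebraic: the only submodule `L` with `M ≤ L ≤ N`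
which is a free factor of `N` is `L = N`. -/
def IsAlgExt {A : Type*} [Ring A] {P : Type*} [AddCommGroup P] [Module A P]
    (M N : Submodule A P) : Prop :=
  M ≤ N ∧ ∀ L : Submodule A P, M ≤ L → IsFreeFactor L N → L = N

/-! If `N = L ⊕ C` with `C` free, then for any `L'` the projection `L' → C` has kernel `L ⊓ L'`
and, by (SF), a free image; a free module is projective, so this kernel is a free factor of `L'`.
When `M ≤ L'` is algebraic and `M ≤ L`, this free factor contains `M`, hence equals `L'`. -/

open Submodule LinearMap

theorem LinearMap.exists_isCompl_ker_of_projective_range {A V W : Type*} [Ring A]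
    [AddCommGroup V] [Module A V] [AddCommGroup W] [Module A W] (f : V →ₗ[A] W)
    [Module.Projective A (range f)] : ∃ S : Submodule A V, IsCompl S (ker f) := by
  obtain ⟨s, hs⟩ := f.rangeRestrict.exists_rightInverse_of_surjective (range_rangeRestrict f)
  have hidem : IsIdempotentElem (s ∘ₗ f.rangeRestrict) := by
    change s ∘ₗ (f.rangeRestrict ∘ₗ s) ∘ₗ f.rangeRestrict = _
    rw [hs, id_comp]
  have hker : ker (s ∘ₗ f.rangeRestrict) = ker f := by
    rw [ker_comp_of_ker_eq_bot _ (ker_eq_bot_of_inverse hs), ker_rangeRestrict]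
  exact ⟨_, hker ▸ hidem.isCompl⟩

theorem isFreeFactor_of_ker_eq_comap {A P W : Type*} [Ring A] [AddCommGroup P] [Module A P]
    [AddCommGroup W] [Module A W] {K L' : Submodule A P} (hKL : K ≤ L') (f : L' →ₗ[A] W)
    (hf : ker f = K.comap L'.subtype) [Module.Free A (range f)] : IsFreeFactor K L' := by
  obtain ⟨S, hS⟩ := f.exists_isCompl_ker_of_projective_range
  have hK : K = (ker f).map L'.subtype := by rw [hf, map_comap_subtype, inf_eq_right.2 hKL]
  refine ⟨hKL, S.map L'.subtype, map_subtype_le _ _, ?_, ?_, ?_⟩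
  · rw [hK, ← map_inf _ L'.injective_subtype, hS.symm.inf_eq_bot, Submodule.map_bot]
  · rw [hK, ← Submodule.map_sup, hS.symm.sup_eq_top, Submodule.map_top, range_subtype]
  · have : Module.Free A S := .of_equiv (f.kerComplementEquivRange hS).symm
    exact .of_equiv (S.equivMapOfInjective _ L'.injective_subtype)

theorem isFreeFactor_inf_of_isCompl {A : Type u} [Ring A] (hSF : HasSF.{u, v} A) {N : Type v}
    [AddCommGroup N] [Module A N] {L C : Submodule A N} (h : IsCompl L C) [Module.Free A C]
    (L' : Submodule A N) : IsFreeFactor (L ⊓ L') L' := by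
  let f := C.projectionOnto L h.symm ∘ₗ L'.subtype
  have : Module.Free A (range f) := hSF C ‹_› (range f)
  refine isFreeFactor_of_ker_eq_comap inf_le_right f ?_
  rw [ker_comp, ker_projectionOnto, comap_inf, comap_subtype_self, inf_top_eq]

theorem IsAlgExt.le_of_isFreeFactor_top {A : Type u} [Ring A] (hSF : HasSF.{u, v} A)
    {N : Type v} [AddCommGroup N] [Module A N] {M L L' : Submodule A N}
    (hL : IsFreeFactor L ⊤) (hML : M ≤ L) (hL' : IsAlgExt M L') : L' ≤ L := by
  obtain ⟨-, C, -, hLC_inf, hLC_sup, hC⟩ := hL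
  have hff := isFreeFactor_inf_of_isCompl hSF ⟨disjoint_iff.2 hLC_inf, codisjoint_iff.2 hLC_sup⟩ L'
  exact inf_eq_right.1 (hL'.2 _ (le_inf hML hL'.1) hff)

theorem algebraicClosure_eq_union_algExts_general {A : Type u} [Ring A]
    (hSF : HasSF.{u, v} A)
    (N : Type v) [AddCommGroup N] [Module A N]
    (M : Submodule A N)
    (L : Submodule A N) (hLalg : IsAlgExt M L) (hLff : IsFreeFactor L ⊤) :
    (∀ L' : Submodule A N, IsAlgExt M L' → L' ≤ L) ∧
    (L : Set N) = ⋃ L' ∈ {L' : Submodule A N | IsAlgExt M L'}, (L' : Set N) := by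
  have hmax (L' : Submodule A N) (hL' : IsAlgExt M L') : L' ≤ L :=
    hL'.le_of_isFreeFactor_top hSF hLff hLalg.1
  exact ⟨hmax, Set.Subset.antisymm (fun _ hx => Set.mem_iUnion₂.2 ⟨L, hLalg, hx⟩)
    (Set.iUnion₂_subset fun L' hL' => hmax L' hL')⟩

theorem algebraicClosure_eq_union_algExts {A : Type u} [Ring A] [StrongRankCondition A]
    (hSF : HasSF.{u, v} A)
    (N : Type v) [AddCommGroup N] [Module A N] [Module.Free A N]
    (M : Submodule A N) (hfg : M.FG ∨ Module.Finite A N)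
    (L : Submodule A N) (hLalg : IsAlgExt M L) (hLff : IsFreeFactor L ⊤) :
    (∀ L' : Submodule A N, IsAlgExt M L' → L' ≤ L) ∧
    (L : Set N) = ⋃ L' ∈ {L' : Submodule A N | IsAlgExt M L'}, (L' : Set N) :=
  algebraicClosure_eq_union_algExts_general hSF N M L hLalg hLff
end

section
/- Let A be a ring with property (SF) which satisfies the strong rank condition. Let Q be a k×m matrix over A, let F be a k×t matrix whose columns are right-linearly independent and whose column space M := R_F contains the column space R_Q, and let B be the t×m matrix with Q = F·B. Let B' be a matrix whose rows form a left basis of the left A-submodule of A^m generated by the rows of B, and let F' be the matrix with F'·B' = Q. Then the extension R_Q ≤ R_{F'} is algebraic and R_{F'} is a free factor of M; that is, the double Q-dual R_{F'} is the algebraic closure of R_Q in M. -/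
universe u v

/-- The column space of a matrix `Q`: the right `A`-submodule (i.e. `Aᵐᵒᵖ`-submodule)
of `A^k` generated by the columns of `Q`. -/
def colSpace {A : Type u} [Ring A] {k m : ℕ} (Q : Matrix (Fin k) (Fin m) A) :
    Submodule Aᵐᵒᵖ (Fin k → A) :=
  Submodule.span Aᵐᵒᵖ (Set.range fun j => fun i => Q i j)

/-- The row space of a matrix `Q`: the left `A`-submodule of `A^m` generated by the
rows of `Q`. -/
def rowSpace {A : Type u} [Ring A] {k m : ℕ} (Q : Matrix (Fin k) (Fin m) A) :
    Submodule A (Fin m → A) :=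
  Submodule.span A (Set.range fun i => fun j => Q i j)

section Aux

variable {A : Type u} [Ring A]

private lemma sum_op_smul_col {k m : ℕ} (G : Matrix (Fin k) (Fin m) A) (c : Fin m → Aᵐᵒᵖ) :
    (∑ j, c j • (fun i => G i j)) = G.mulVec (fun j => (c j).unop) := by
  funext i
  simp [Finset.sum_apply, Matrix.mulVec, dotProduct,
    MulOpposite.smul_eq_mul_unop]

private lemma mem_colSpace_iff {k m : ℕ} {G : Matrix (Fin k) (Fin m) A} {v : Fin k → A} :
    v ∈ colSpace G ↔ ∃ x : Fin m → A, G.mulVec x = v := by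
  rw [colSpace, Submodule.mem_span_range_iff_exists_fun]
  constructor
  · rintro ⟨c, rfl⟩
    exact ⟨fun j => (c j).unop, (sum_op_smul_col G c).symm⟩
  · rintro ⟨x, rfl⟩
    refine ⟨fun j => MulOpposite.op (x j), ?_⟩
    rw [sum_op_smul_col]
    rfl

private lemma col_mem_colSpace {k m : ℕ} (G : Matrix (Fin k) (Fin m) A) (j : Fin m) :
    (fun i => G i j) ∈ colSpace G :=
  Submodule.subset_span ⟨j, rfl⟩

private lemma colSpace_mul_le {k m n : ℕ} (G : Matrix (Fin k) (Fin m) A)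
    (X : Matrix (Fin m) (Fin n) A) : colSpace (G * X) ≤ colSpace G := by
  intro v hv
  obtain ⟨x, rfl⟩ := mem_colSpace_iff.mp hv
  exact mem_colSpace_iff.mpr ⟨X.mulVec x, Matrix.mulVec_mulVec x G X⟩

private lemma sum_smul_row {k m : ℕ} (G : Matrix (Fin k) (Fin m) A) (c : Fin k → A) :
    (∑ i, c i • (fun j => G i j)) = Matrix.vecMul c G := by
  funext j
  simp [Finset.sum_apply, Matrix.vecMul, dotProduct]

private lemma mem_rowSpace_iff {k m : ℕ} {G : Matrix (Fin k) (Fin m) A} {v : Fin m → A} :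
    v ∈ rowSpace G ↔ ∃ c : Fin k → A, Matrix.vecMul c G = v := by
  rw [rowSpace, Submodule.mem_span_range_iff_exists_fun]
  exact exists_congr fun c => by rw [sum_smul_row]

private lemma row_mem_rowSpace {k m : ℕ} (G : Matrix (Fin k) (Fin m) A) (i : Fin k) :
    (fun j => G i j) ∈ rowSpace G :=
  Submodule.subset_span ⟨i, rfl⟩

/-- Left row-independence gives matrix cancellation. -/
private lemma cancel_of_rowIndep {s m : ℕ} {B' : Matrix (Fin s) (Fin m) A}
    (h : LinearIndependent A (fun i => fun j => B' i j))
    {n : ℕ} (X : Matrix (Fin n) (Fin s) A) (hX : X * B' = 0) : X = 0 := by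
  funext i l
  have hrow : Matrix.vecMul (X i) B' = 0 := by
    funext j
    have := congrFun (congrFun hX i) j
    simpa [Matrix.mul_apply, Matrix.vecMul, dotProduct] using this
  have := Fintype.linearIndependent_iff.mp h (X i) (by rw [sum_smul_row, hrow])
  exact this l

/-- `A` is free as a right module over itself. -/
private lemma free_op_self : Module.Free Aᵐᵒᵖ A := by
  refine Module.Free.of_equiv (?_ : Aᵐᵒᵖ ≃ₗ[Aᵐᵒᵖ] A)
  refine
    { toFun := MulOpposite.unop
      invFun := MulOpposite.op
      map_add' := fun x y => rfl
      map_smul' := fun r x => ?_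
      left_inv := fun x => rfl
      right_inv := fun x => rfl }
  rfl

private lemma free_op_pi (k : ℕ) : Module.Free Aᵐᵒᵖ (Fin k → A) := by
  haveI : Module.Free Aᵐᵒᵖ A := free_op_self
  infer_instance

end Aux

theorem doubleDual_is_algebraicClosure {A : Type u} [Ring A]
    [StrongRankCondition A] [StrongRankCondition Aᵐᵒᵖ]
    (hSF : HasSF.{u, u} A) (hSFop : HasSF.{u, u} Aᵐᵒᵖ)
    {k m t s : ℕ} (Q : Matrix (Fin k) (Fin m) A)
    (F : Matrix (Fin k) (Fin t) A)
    (hFind : LinearIndependent Aᵐᵒᵖ (fun j => fun i => F i j))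
    (hQF : colSpace Q ≤ colSpace F)
    (B : Matrix (Fin t) (Fin m) A) (hB : Q = F * B)
    (B' : Matrix (Fin s) (Fin m) A)
    (hB'ind : LinearIndependent A (fun i => fun j => B' i j))
    (hB'span : rowSpace B' = rowSpace B)
    (F' : Matrix (Fin k) (Fin s) A) (hF' : F' * B' = Q) :
    IsAlgExt (colSpace Q) (colSpace F') ∧ IsFreeFactor (colSpace F') (colSpace F) := by
  classical
  -- injectivity of F on column vectors
  have hFinj : ∀ x : Fin t → A, F.mulVec x = 0 → x = 0 := by
    intro x hx
    have := Fintype.linearIndependent_iff.mp hFind (fun j => MulOpposite.op (x j))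
      (by rw [sum_op_smul_col]; simpa using hx)
    funext j
    simpa using congrArg MulOpposite.unop (this j)
  -- find C with B = C * B'
  have hCex : ∀ i : Fin t, ∃ c : Fin s → A, Matrix.vecMul c B' = fun j => B i j := by
    intro i
    have : (fun j => B i j) ∈ rowSpace B' := by
      rw [hB'span]; exact row_mem_rowSpace B i
    exact mem_rowSpace_iff.mp this
  choose C0 hC0 using hCex
  set C : Matrix (Fin t) (Fin s) A := Matrix.of C0 with hCdef
  have hC : C * B' = B := by
    funext i j
    have := congrFun (hC0 i) j
    simpa [Matrix.mul_apply, Matrix.vecMul, dotProduct, C] using this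
  -- find D with D * B = B'
  have hDex : ∀ i : Fin s, ∃ c : Fin t → A, Matrix.vecMul c B = fun j => B' i j := by
    intro i
    have : (fun j => B' i j) ∈ rowSpace B := by
      rw [← hB'span]; exact row_mem_rowSpace B' i
    exact mem_rowSpace_iff.mp this
  choose D0 hD0 using hDex
  set D : Matrix (Fin s) (Fin t) A := Matrix.of D0 with hDdef
  have hD : D * B = B' := by
    funext i j
    have := congrFun (hD0 i) j
    simpa [Matrix.mul_apply, Matrix.vecMul, dotProduct, D] using this
  -- D * C = 1
  have hDC : D * C = 1 := by
    have h0 : (D * C - 1) * B' = 0 := by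
      rw [Matrix.sub_mul, Matrix.one_mul, Matrix.mul_assoc, hC, hD, sub_self]
    have := cancel_of_rowIndep hB'ind _ h0
    exact sub_eq_zero.mp this
  -- F' = F * C
  have hF'C : F' = F * C := by
    have h0 : (F' - F * C) * B' = 0 := by
      rw [Matrix.sub_mul, Matrix.mul_assoc, hC, ← hB, hF', sub_self]
    have := cancel_of_rowIndep hB'ind _ h0
    exact sub_eq_zero.mp this
  -- colSpace Q ≤ colSpace F'
  have hQF' : colSpace Q ≤ colSpace F' := by
    rw [← hF']
    exact colSpace_mul_le F' B'
  constructor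
  · -- IsAlgExt
    refine ⟨hQF', ?_⟩
    rintro L hQL ⟨hLN, L'', hL''N, hinf, hsup, hfree⟩
    refine le_antisymm hLN ?_
    -- decompose columns of F'
    have hdec : ∀ l : Fin s, ∃ u ∈ L, ∃ w ∈ L'', (fun i => F' i l) = u + w := by
      intro l
      have : (fun i => F' i l) ∈ L ⊔ L'' := by
        rw [hsup]; exact col_mem_colSpace F' l
      obtain ⟨u, hu, w, hw, huw⟩ := Submodule.mem_sup.mp this
      exact ⟨u, hu, w, hw, huw.symm⟩
    choose u hu w hw huw using hdec
    -- key: all w l = 0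
    have hw0 : ∀ l, w l = 0 := by
      -- for each column index j of Q, the L''-components cancel
      have hz : ∀ j : Fin m, (∑ l, MulOpposite.op (B' l j) • w l) = 0 := by
        intro j
        have e1 : (∑ l, MulOpposite.op (B' l j) • (fun i => F' i l)) = fun i => Q i j := by
          rw [sum_op_smul_col]
          funext i
          simp only [MulOpposite.unop_op]
          rw [← hF']
          simp [Matrix.mulVec, dotProduct, Matrix.mul_apply]
        have e2 : (∑ l, MulOpposite.op (B' l j) • (u l + w l)) = fun i => Q i j := by
          rw [← e1]
          exact Finset.sum_congr rfl fun l _ => by rw [← huw l]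
        have e3 : (∑ l, MulOpposite.op (B' l j) • w l)
            = (fun i => Q i j) - (∑ l, MulOpposite.op (B' l j) • u l) := by
          rw [← e2, eq_sub_iff_add_eq, ← Finset.sum_add_distrib]
          exact Finset.sum_congr rfl fun l _ => by rw [← smul_add, add_comm (u l)]
        have hmemL : (∑ l, MulOpposite.op (B' l j) • w l) ∈ L := by
          rw [e3]
          exact sub_mem (hQL (col_mem_colSpace Q j))
            (Submodule.sum_mem _ fun l _ => Submodule.smul_mem _ _ (hu l))
        have hmemL'' : (∑ l, MulOpposite.op (B' l j) • w l) ∈ L'' :=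
          Submodule.sum_mem _ fun l _ => Submodule.smul_mem _ _ (hw l)
        have : (∑ l, MulOpposite.op (B' l j) • w l) ∈ L ⊓ L'' := ⟨hmemL, hmemL''⟩
        rw [hinf] at this
        exact this
      -- pass to the free module L''
      set w' : Fin s → ↥L'' := fun l => ⟨w l, hw l⟩ with hw'def
      have hz' : ∀ j : Fin m, (∑ l, MulOpposite.op (B' l j) • w' l) = 0 := by
        intro j
        apply Subtype.ext
        have : ((∑ l, MulOpposite.op (B' l j) • w' l : ↥L'') : Fin k → A)
            = ∑ l, MulOpposite.op (B' l j) • w l := by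
          simp [w']
        rw [this, hz j]
        rfl
      letI := hfree
      set b := Module.Free.chooseBasis Aᵐᵒᵖ ↥L'' with hbdef
      have hwrepr : ∀ l, b.repr (w' l) = 0 := by
        intro l
        ext β
        have hcoef : ∀ j : Fin m, (∑ l', MulOpposite.op (B' l' j) • (b.repr (w' l') β)) = 0 := by
          intro j
          have := congrArg (fun z => (b.repr z) β) (hz' j)
          simpa [map_sum, Finsupp.sum_apply] using this
        have hvec : Matrix.vecMul (fun l' => (b.repr (w' l') β).unop) B' = 0 := by
          funext j
          have := congrArg MulOpposite.unop (hcoef j)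
          simpa [Matrix.vecMul, dotProduct, Finset.unop_sum] using this
        have hg := Fintype.linearIndependent_iff.mp hB'ind _ (by rw [sum_smul_row, hvec])
        have := hg l
        simpa using congrArg MulOpposite.op this
      intro l
      have hz0 : w' l = 0 := b.repr.map_eq_zero_iff.mp (hwrepr l)
      simpa [w'] using congrArg Subtype.val hz0
    -- conclude colSpace F' ≤ L
    rw [colSpace, Submodule.span_le]
    rintro _ ⟨l, rfl⟩
    show (fun i => F' i l) ∈ (L : Set (Fin k → A))
    have heq : (fun i => F' i l) = u l := by rw [huw l, hw0 l, add_zero]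
    rw [heq]
    exact hu l
  · -- IsFreeFactor (colSpace F') (colSpace F)
    have le1 : colSpace F' ≤ colSpace F := by
      rw [hF'C]; exact colSpace_mul_le F C
    refine ⟨le1, colSpace ((F * (1 - C * D) : Matrix (Fin k) (Fin t) A)), colSpace_mul_le F _, ?_, ?_, ?_⟩
    · -- intersection is trivial
      refine le_antisymm ?_ bot_le
      rintro v hv
      obtain ⟨hv1, hv2⟩ := Submodule.mem_inf.mp hv
      rw [hF'C] at hv1
      obtain ⟨a, ha⟩ := mem_colSpace_iff.mp hv1
      obtain ⟨c, hc⟩ := mem_colSpace_iff.mp hv2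
      have hwdef : F.mulVec (C.mulVec a - (1 - C * D).mulVec c) = 0 := by
        rw [Matrix.mulVec_sub, Matrix.mulVec_mulVec, Matrix.mulVec_mulVec, ha, hc, sub_self]
      have hweq : C.mulVec a = (1 - C * D).mulVec c := by
        have := hFinj _ hwdef
        exact sub_eq_zero.mp this
      have hCDC : C * D * C = C := by
        rw [Matrix.mul_assoc, hDC, Matrix.mul_one]
      have h1 : (C * D).mulVec (C.mulVec a) = C.mulVec a := by
        rw [Matrix.mulVec_mulVec, hCDC]
      have h2 : (C * D).mulVec ((1 - C * D).mulVec c) = 0 := by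
        rw [Matrix.mulVec_mulVec]
        have hz : (C * D) * (1 - C * D) = 0 := by
          rw [Matrix.mul_sub, Matrix.mul_one, ← Matrix.mul_assoc (C * D) C D, hCDC, sub_self]
        rw [hz, Matrix.zero_mulVec]
      have hCa : C.mulVec a = 0 := by
        rw [hweq] at h1 ⊢
        rw [← h1, h2]
      have : v = 0 := by
        rw [← ha, ← Matrix.mulVec_mulVec, hCa, Matrix.mulVec_zero]
      simp [this]
    · -- sup is colSpace F
      refine le_antisymm (sup_le le1 (colSpace_mul_le F _)) ?_
      rw [colSpace, Submodule.span_le]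
      rintro _ ⟨j, rfl⟩
      show (fun i => F i j) ∈
        ((colSpace F' ⊔ colSpace ((F * (1 - C * D) : Matrix (Fin k) (Fin t) A)) : Submodule Aᵐᵒᵖ (Fin k → A)) : Set (Fin k → A))
      have hsplit : (fun i => F i j)
          = (fun i => ((F * C) * D) i j) + (fun i => ((F * (1 - C * D) : Matrix (Fin k) (Fin t) A)) i j) := by
        funext i
        have hFeq : (F * C) * D + (F * (1 - C * D) : Matrix (Fin k) (Fin t) A) = F := by
          rw [Matrix.mul_assoc, ← Matrix.mul_add, add_sub_cancel, Matrix.mul_one]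
        have := congrFun (congrFun hFeq i) j
        simpa using this.symm
      rw [hsplit]
      refine add_mem (Submodule.mem_sup_left ?_)
        (Submodule.mem_sup_right (col_mem_colSpace ((F * (1 - C * D) : Matrix (Fin k) (Fin t) A)) j))
      rw [hF'C]
      exact colSpace_mul_le (F * C) D (col_mem_colSpace ((F * C) * D) j)
    · exact hSFop (Fin k → A) (free_op_pi k) (colSpace ((F * (1 - C * D) : Matrix (Fin k) (Fin t) A)))
end

section
/- Let A be a ring with property (SF) which satisfies the strong rank condition, and let Q be a k×m matrix over A. Let R_max be a right A-submodule of A^k such that the extension R_Q ≤ R_max is algebraic and R_max is a free factor of A^k, and let L_max be a left A-submodule of A^m such that the extension L_Q ≤ L_max is algebraic and L_max is a free factor of A^m. Then rank(R_Q) = rank(L_max) and rank(L_Q) = rank(R_max), where all four modules are free A-modules and rank denotes the cardinality of a basis. -/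
universe u v

/-!
Let `L ≤ Aᵐ` be a direct summand containing the rows of `Q`, and let `β` be a `k × r` matrix whose
columns form a basis of the column space, so that `Q = β W` and `β = Q E` for some `W` and `E`.
Projecting the rows of `W` onto `L` gives a matrix `U` with rows in `L` and still `Q = β U`; then
`β = β U E`, and independence of the columns of `β` forces `U E = 1`. So the `r` rows of `U` are
independent and span a direct summand `N` of `Aᵐ` with `rowSpace Q ≤ N ≤ L`. By (SF) the complement
of `N` inside `L` is free, so algebraicity of `rowSpace Q ≤ L` gives `N = L`, whence `rank L = r`.
The second equality is the same argument with rows and columns, and `A` and `Aᵐᵒᵖ`, exchanged.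
-/

open Submodule Matrix MulOpposite

instance {A : Type*} [Ring A] : Module.Free Aᵐᵒᵖ A :=
  .of_equiv (opLinearEquiv Aᵐᵒᵖ).symm

section Module

variable {R P : Type*} [Ring R] [AddCommGroup P] [Module R P]

theorem IsFreeFactor.exists_isCompl {L : Submodule R P} (hL : IsFreeFactor L ⊤) :
    ∃ C : Submodule R P, IsCompl L C := by
  obtain ⟨-, C, -, hinf, hsup, -⟩ := hL
  exact ⟨C, disjoint_iff.mpr hinf, codisjoint_iff.mpr hsup⟩

theorem IsAlgExt.eq_of_isCompl {M N K L : Submodule R P} (hML : IsAlgExt M L) (hMN : M ≤ N)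
    (hNL : N ≤ L) (hNK : IsCompl N K) [Module.Free R ↥(K ⊓ L)] : N = L :=
  hML.2 N hMN ⟨hNL, K ⊓ L, inf_le_right, (hNK.disjoint.mono_right inf_le_left).eq_bot,
    by rw [← sup_inf_assoc_of_le K hNL, hNK.sup_eq_top, top_inf_eq], inferInstance⟩

theorem LinearMap.isCompl_range_ker_of_comp_eq_id {M : Type*} [AddCommGroup M] [Module R M]
    {f : P →ₗ[R] M} {g : M →ₗ[R] P} (h : f ∘ₗ g = LinearMap.id) :
    IsCompl (LinearMap.range g) (LinearMap.ker (g ∘ₗ f)) := by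
  have hidem : IsIdempotentElem (g ∘ₗ f) := by
    change (g ∘ₗ f) ∘ₗ (g ∘ₗ f) = g ∘ₗ f
    rw [LinearMap.comp_assoc, ← LinearMap.comp_assoc f g f, h, LinearMap.id_comp]
  have hsurj : LinearMap.range f = ⊤ :=
    LinearMap.range_eq_top.mpr fun x => ⟨g x, congrArg (· x) h⟩
  rw [← LinearMap.range_comp_of_range_eq_top g hsurj]
  exact IsIdempotentElem.isCompl hidem

variable {κ ι : Type*} [Fintype ι] {q : κ → P} {β : Matrix κ ι R} {w : ι → P}
  {φ : P →ₗ[R] ι → R}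

theorem comp_linearCombination_eq_id [DecidableEq ι] (hβ : ∀ x, β *ᵥ x = 0 → x = 0)
    (hq : ∀ i, q i = ∑ e, β i e • w e) (hφ : ∀ i, φ (q i) = β i) {π : P →ₗ[R] P}
    (hπ : ∀ i, π (q i) = q i) :
    φ ∘ₗ π ∘ₗ Fintype.linearCombination R w = LinearMap.id := by
  set T := φ ∘ₗ π ∘ₗ Fintype.linearCombination R w
  have hT : ∀ i, T (β i) = β i := fun i => by
    simp [T, Fintype.linearCombination_apply, ← hq, hπ, hφ]
  have hsum : ∀ y : ι → R, ∑ e, y e • Pi.single e (1 : R) = y := fun y => by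
    funext j
    simp [Finset.sum_apply, Pi.single_apply]
  refine LinearMap.pi_ext' fun e => LinearMap.ext_ring <| funext fun e' => ?_
  -- `T` fixes every row of `β`, so `β` kills each column of the matrix of `T - 1`.
  suffices (fun e => T (Pi.single e 1) e' - (Pi.single e 1 : ι → R) e') = 0 by
    simpa [sub_eq_zero] using congrFun this e
  refine hβ _ (funext fun i => ?_)
  have h := congrFun (hT i) e'
  rw [← hsum (β i), map_sum] at h
  simpa [Matrix.mulVec, dotProduct, mul_sub, Finset.sum_sub_distrib, sub_eq_zero] using h

theorem rank_eq_card_of_isAlgExt_span [StrongRankCondition R]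
    (hfree : ∀ N : Submodule R P, Module.Free R N) {L C : Submodule R P} (hLC : IsCompl L C)
    (hL : IsAlgExt (span R (Set.range q)) L) (hβ : ∀ x, β *ᵥ x = 0 → x = 0)
    (hq : ∀ i, q i = ∑ e, β i e • w e) (hφ : ∀ i, φ (q i) = β i) :
    Module.rank R L = Fintype.card ι := by
  classical
  set π := L.projection C hLC
  have hπ : ∀ i, π (q i) = q i := fun i =>
    projection_apply_of_mem_left hLC (hL.1 (subset_span ⟨i, rfl⟩))
  set g := π ∘ₗ Fintype.linearCombination R w
  have hφg : φ ∘ₗ g = LinearMap.id := comp_linearCombination_eq_id hβ hq hφ hπ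
  have hgL : LinearMap.range g ≤ L :=
    (LinearMap.range_comp_le_range _ _).trans (range_projection hLC).le
  have hqg : span R (Set.range q) ≤ LinearMap.range g := by
    refine span_le.mpr ?_
    rintro _ ⟨i, rfl⟩
    exact ⟨β i, by simp [g, Fintype.linearCombination_apply, ← hq, hπ]⟩
  have := hfree (LinearMap.ker (g ∘ₗ φ) ⊓ L)
  have hg_eq : LinearMap.range g = L :=
    hL.eq_of_isCompl hqg hgL (LinearMap.isCompl_range_ker_of_comp_eq_id hφg)
  have hg : Function.Injective g := Function.LeftInverse.injective fun x => congrArg (· x) hφg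
  have hrank := lift_rank_range_of_injective g hg
  rwa [rank_fun', Cardinal.lift_natCast, Cardinal.lift_eq_nat_iff, hg_eq] at hrank

end Module

section Matrix

variable {A : Type u} [Ring A] {k m : ℕ} (Q : Matrix (Fin k) (Fin m) A)

theorem exists_matrix_of_basis_colSpace {ι : Type*} [Fintype ι]
    (b : Module.Basis ι Aᵐᵒᵖ (colSpace Q)) :
    ∃ β : Matrix (Fin k) ι A,
      (∀ x, β *ᵥ x = 0 → x = 0) ∧ (∃ W : Matrix ι (Fin m) A, Q = β * W) ∧
        ∃ E : Matrix (Fin m) ι A, β = Q * E := by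
  have hcol : ∀ j, (fun i => Q i j) ∈ colSpace Q := fun j => subset_span ⟨j, rfl⟩
  choose E hE using fun e => (mem_span_range_iff_exists_fun Aᵐᵒᵖ).mp (b e).2
  refine ⟨.of fun i e => (b e : Fin k → A) i, fun x hx => ?_,
    ⟨.of fun e j => unop (b.repr ⟨_, hcol j⟩ e), ?_⟩, ⟨.of fun j e => unop (E e j), ?_⟩⟩
  · have h0 : ∑ e, op (x e) • b e = 0 := by
      ext i
      simpa [mulVec, dotProduct] using congrFun hx i
    funext e
    exact op_injective (Fintype.linearIndependent_iff.mp b.linearIndependent _ h0 e)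
  · refine Matrix.ext fun i j => ?_
    have h := congrArg Subtype.val (b.sum_repr ⟨_, hcol j⟩)
    rw [Submodule.coe_sum] at h
    simpa [Matrix.mul_apply] using (congrFun h i).symm
  · refine Matrix.ext fun i e => ?_
    simpa [Matrix.mul_apply] using (congrFun (hE e) i).symm

theorem exists_matrix_of_basis_rowSpace {ι : Type*} [Fintype ι]
    (b : Module.Basis ι A (rowSpace Q)) :
    ∃ γ : Matrix ι (Fin m) A,
      (∀ x, x ᵥ* γ = 0 → x = 0) ∧ (∃ V : Matrix (Fin k) ι A, Q = V * γ) ∧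
        ∃ F : Matrix ι (Fin k) A, γ = F * Q := by
  have hrow : ∀ i, (fun j => Q i j) ∈ rowSpace Q := fun i => subset_span ⟨i, rfl⟩
  choose F hF using fun e => (mem_span_range_iff_exists_fun A).mp (b e).2
  refine ⟨.of fun e j => (b e : Fin m → A) j, fun x hx => ?_,
    ⟨.of fun i e => b.repr ⟨_, hrow i⟩ e, ?_⟩, ⟨.of F, ?_⟩⟩
  · have h0 : ∑ e, x e • b e = 0 := by
      ext j
      simpa [vecMul, dotProduct] using congrFun hx j
    exact funext (Fintype.linearIndependent_iff.mp b.linearIndependent _ h0)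
  · refine Matrix.ext fun i j => ?_
    have h := congrArg Subtype.val (b.sum_repr ⟨_, hrow i⟩)
    rw [Submodule.coe_sum] at h
    simpa [Matrix.mul_apply] using (congrFun h j).symm
  · refine Matrix.ext fun e j => ?_
    simpa [Matrix.mul_apply] using (congrFun (hF e) j).symm

variable [StrongRankCondition A] [StrongRankCondition Aᵐᵒᵖ]

theorem rank_colSpace_eq_rank_of_isAlgExt_rowSpace [Module.Free Aᵐᵒᵖ (colSpace Q)]
    (hfree : ∀ N : Submodule A (Fin m → A), Module.Free A N) {L C : Submodule A (Fin m → A)}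
    (hLC : IsCompl L C) (hL : IsAlgExt (rowSpace Q) L) :
    Module.rank Aᵐᵒᵖ (colSpace Q) = Module.rank A L := by
  have : Module.Finite Aᵐᵒᵖ (colSpace Q) := .span_of_finite _ (Set.finite_range _)
  obtain ⟨β, hβ, ⟨W, hW⟩, ⟨E, hE⟩⟩ :=
    exists_matrix_of_basis_colSpace Q (Module.Free.chooseBasis Aᵐᵒᵖ (colSpace Q))
  rw [Module.Free.rank_eq_card_chooseBasisIndex, Cardinal.mk_fintype,
    rank_eq_card_of_isAlgExt_span hfree hLC hL hβ (w := W) (φ := E.vecMulLinear)]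
  · intro i
    funext j
    simp [hW, Matrix.mul_apply, Finset.sum_apply]
  · intro i
    rw [hE]
    rfl

theorem rank_rowSpace_eq_rank_of_isAlgExt_colSpace [Module.Free A (rowSpace Q)]
    (hfree : ∀ N : Submodule Aᵐᵒᵖ (Fin k → A), Module.Free Aᵐᵒᵖ N)
    {L C : Submodule Aᵐᵒᵖ (Fin k → A)} (hLC : IsCompl L C) (hL : IsAlgExt (colSpace Q) L) :
    Module.rank A (rowSpace Q) = Module.rank Aᵐᵒᵖ L := by
  have : Module.Finite A (rowSpace Q) := .span_of_finite _ (Set.finite_range _)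
  obtain ⟨γ, hγ, ⟨V, hV⟩, ⟨F, hF⟩⟩ :=
    exists_matrix_of_basis_rowSpace Q (Module.Free.chooseBasis A (rowSpace Q))
  let φ : (Fin k → A) →ₗ[Aᵐᵒᵖ] _ → Aᵐᵒᵖ :=
    (LinearEquiv.piCongrRight fun _ => opLinearEquiv Aᵐᵒᵖ).toLinearMap ∘ₗ
      mulVecBilin A Aᵐᵒᵖ F
  rw [Module.Free.rank_eq_card_chooseBasisIndex, Cardinal.mk_fintype,
    rank_eq_card_of_isAlgExt_span hfree hLC hL (β := .of fun j e => op (γ e j))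
      (w := fun e i => V i e) (φ := φ)]
  · intro x hx
    have h0 : (fun e => unop (x e)) ᵥ* γ = 0 := by
      funext j
      apply op_injective
      simpa [mulVec, vecMul, dotProduct] using congrFun hx j
    funext e
    exact unop_injective (congrFun (hγ _ h0) e)
  · intro j
    funext i
    simp [hV, Matrix.mul_apply, Finset.sum_apply]
  · intro j
    funext e
    simp [φ, hF, Matrix.mul_apply, mulVec, dotProduct]

end Matrix

theorem rank_colSpace_eq_rank_rowClosure {A : Type u} [Ring A]
    [StrongRankCondition A] [StrongRankCondition Aᵐᵒᵖ]
    (hSF : HasSF.{u, u} A) (hSFop : HasSF.{u, u} Aᵐᵒᵖ)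
    {k m : ℕ} (Q : Matrix (Fin k) (Fin m) A)
    (Rmax : Submodule Aᵐᵒᵖ (Fin k → A))
    (hRalg : IsAlgExt (colSpace Q) Rmax) (hRff : IsFreeFactor Rmax ⊤)
    (Lmax : Submodule A (Fin m → A))
    (hLalg : IsAlgExt (rowSpace Q) Lmax) (hLff : IsFreeFactor Lmax ⊤) :
    Module.rank Aᵐᵒᵖ ↥(colSpace Q) = Module.rank A ↥Lmax ∧
    Module.rank A ↥(rowSpace Q) = Module.rank Aᵐᵒᵖ ↥Rmax := by
  have := hSFop _ inferInstance (colSpace Q)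
  have := hSF _ inferInstance (rowSpace Q)
  obtain ⟨C, hLC⟩ := hLff.exists_isCompl
  obtain ⟨D, hRD⟩ := hRff.exists_isCompl
  exact ⟨rank_colSpace_eq_rank_of_isAlgExt_rowSpace Q (hSF _ inferInstance) hLC hLalg,
    rank_rowSpace_eq_rank_of_isAlgExt_colSpace Q (hSFop _ inferInstance) hRD hRalg⟩
end
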